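/- Let P ∈ [0,1]^{k×k} be symmetric with column sums 1 = c_1 ≤ ⋯ ≤ c_k such that W is connected and non-bipartite, and suppose the backbone graph B has no vertices of degree zero, i.e. for every i ∈ [k] there exists j ∈ [k] with P_{ij} = 1. Then there exist constants d > 1, c > 0 and t_0, depending only on P, such that for every t ≥ t_0, the t-th order stochastic Kronecker graph G generated by P is connected with probability at least 1 − e^{−c d^t}. -/

import Mathlib

open Finset MeasureTheory
open scoped Classical ENNReal

noncomputable section

namespace SKG

/-- The `j`-th column sum of `P`. -/
def colSum {k : ℕ} (P : Matrix (Fin k) (Fin k) ℝ) (j : Fin k) : ℝ := ∑ i, P i j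

/-- The weighted graph `W(P)` is connected: any two vertices are joined by a
walk along pairs with positive weight. -/
def connectedW {k : ℕ} (P : Matrix (Fin k) (Fin k) ℝ) : Prop :=
  ∀ i j : Fin k, Relation.ReflTransGen (fun a b => 0 < P a b) i j

/-- The weighted graph `W(P)` is non-bipartite: there is no proper two-coloring
of the graph with an edge wherever `P i j > 0`. -/
def nonBipartiteW {k : ℕ} (P : Matrix (Fin k) (Fin k) ℝ) : Prop :=
  ¬ ∃ f : Fin k → Bool, ∀ i j : Fin k, 0 < P i j → f i ≠ f j

/-- The signature of a vertex `v ∈ [k]^t`: the proportion of coordinates equal to each symbol. -/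
def sig {k : ℕ} (t : ℕ) (v : Fin t → Fin k) : Fin k → ℝ :=
  fun i => ((Finset.univ.filter fun l => v l = i).card : ℝ) / t

/-- The transition matrix `M = C⁻¹ P` of the uniform random walk on `W`. -/
def MW {k : ℕ} (P : Matrix (Fin k) (Fin k) ℝ) : Matrix (Fin k) (Fin k) ℝ :=
  Matrix.of fun i j => P i j / colSum P i

/-- The Kronecker-power edge probability `P^{⊗t}_{uv} = ∏ l P_{u_l v_l}`. -/
def pk {k : ℕ} (P : Matrix (Fin k) (Fin k) ℝ) (t : ℕ) (u v : Fin t → Fin k) : ℝ :=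
  ∏ l, P (u l) (v l)

/-- The volume of `W`: the sum of all column sums. -/
def volW {k : ℕ} (P : Matrix (Fin k) (Fin k) ℝ) : ℝ := ∑ j, colSum P j

/-- The vector `L = (ln c₁, …, ln c_k)`. -/
def LW {k : ℕ} (P : Matrix (Fin k) (Fin k) ℝ) : Fin k → ℝ :=
  fun i => Real.log (colSum P i)

/-- Standard inner product on `ℝ^k`. -/
def ip {k : ℕ} (x y : Fin k → ℝ) : ℝ := ∑ i, x i * y i

/-- The set `S_ε` of vertices with signature close to the stationary distribution. -/
def Sset {k : ℕ} (P : Matrix (Fin k) (Fin k) ℝ) (ε : ℝ) (t : ℕ) : Set (Fin t → Fin k) :=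
  {v | ∀ i : Fin k, (1 - ε) * (colSum P i / volW P) < sig t v i}

/-- The set `Σ_ν` of vertices whose signature stays above `ν` against `L` under the Markov chain. -/
def SigmaSet {k : ℕ} (P : Matrix (Fin k) (Fin k) ℝ) (ν : ℝ) (t : ℕ) : Set (Fin t → Fin k) :=
  {v | ∀ s : ℕ, ν ≤ ip (Matrix.vecMul (sig t v) ((MW P) ^ s)) (LW P)}

/-- Bernoulli-type measure on `Bool` with success probability `p`. -/
def bern (p : ℝ) : Measure Bool :=
  ENNReal.ofReal p • Measure.dirac true + ENNReal.ofReal (1 - p) • Measure.dirac false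

instance bern.isFiniteMeasure (p : ℝ) : IsFiniteMeasure (bern p) := by
  constructor
  have : bern p Set.univ = ENNReal.ofReal p * Measure.dirac true Set.univ
      + ENNReal.ofReal (1 - p) * Measure.dirac false Set.univ := by
    simp [bern]
  rw [this]
  simp only [measure_univ, mul_one]
  exact ENNReal.add_lt_top.mpr ⟨ENNReal.ofReal_lt_top, ENNReal.ofReal_lt_top⟩

/-- The edge probability, as a symmetric function on unordered pairs of vertices.
When `P` is symmetric this equals `P^{⊗t}_{uv}`. -/
def symProb {k : ℕ} (P : Matrix (Fin k) (Fin k) ℝ) (t : ℕ) : Sym2 (Fin t → Fin k) → ℝ :=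
  Sym2.lift ⟨fun u v => ∏ l, (P (u l) (v l) + P (v l) (u l)) / 2,
    fun u v => Finset.prod_congr rfl fun l _ => by ring⟩

/-- The law of the `t`-th order stochastic Kronecker graph generated by `P`:
each unordered pair of vertices gets an independent Bernoulli(`P^{⊗t}_{uv}`) indicator. -/
def skg {k : ℕ} (P : Matrix (Fin k) (Fin k) ℝ) (t : ℕ) :
    Measure (Sym2 (Fin t → Fin k) → Bool) :=
  Measure.pi fun e => bern (symProb P t e)

/-- The simple graph determined by a sample point `ω` of edge indicators. -/
def graphOf {k t : ℕ} (ω : Sym2 (Fin t → Fin k) → Bool) :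
    SimpleGraph (Fin t → Fin k) where
  Adj u v := u ≠ v ∧ ω s(u, v) = true
  symm := ⟨fun u v h => ⟨h.1.symm, by rw [Sym2.eq_swap]; exact h.2⟩⟩
  loopless := ⟨fun u h => h.1 rfl⟩

end SKG

/- ======================== auxiliary development ======================== -/
namespace SKGProof
open SKG

section Measure

lemma bern_apply (p : ℝ) (s : Set Bool) :
    bern p s = ENNReal.ofReal p * s.indicator 1 true
      + ENNReal.ofReal (1 - p) * s.indicator 1 false := by
  simp [bern, Measure.dirac_apply' _ (by measurability : MeasurableSet s)]

lemma bern_true (p : ℝ) : bern p {true} = ENNReal.ofReal p := by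
  rw [bern_apply]; simp [Set.indicator]

lemma bern_false (p : ℝ) : bern p {false} = ENNReal.ofReal (1 - p) := by
  rw [bern_apply]; simp [Set.indicator]

lemma bern_univ (p : ℝ) (h0 : 0 ≤ p) (h1 : p ≤ 1) : bern p Set.univ = 1 := by
  rw [bern_apply]
  simp only [Set.indicator_univ, Pi.one_apply, mul_one]
  rw [← ENNReal.ofReal_add h0 (by linarith)]
  norm_num

lemma bern_isProb (p : ℝ) (h0 : 0 ≤ p) (h1 : p ≤ 1) : IsProbabilityMeasure (bern p) :=
  ⟨bern_univ p h0 h1⟩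

variable {ι : Type*} [Fintype ι]

lemma measurableSet_all (A : Set (ι → Bool)) : MeasurableSet A := by
  have hsing : ∀ f : ι → Bool, MeasurableSet ({f} : Set (ι → Bool)) := by
    intro f
    have : ({f} : Set (ι → Bool)) = Set.univ.pi (fun e => {f e}) := by
      ext g; simp [Set.mem_pi, funext_iff]
    rw [this]
    exact MeasurableSet.univ_pi (fun e => measurableSet_singleton _)
  have : A = ⋃ f : A, ({(f : ι → Bool)} : Set (ι → Bool)) := by
    ext g; simp
  rw [this]
  exact MeasurableSet.iUnion fun f => hsing _

/-- weight function -/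
def wgt (q : ι → ℝ) (e : ι) (b : Bool) : ℝ≥0∞ :=
  if b then ENNReal.ofReal (q e) else ENNReal.ofReal (1 - q e)

def pm (q : ι → ℝ) : Measure (ι → Bool) := Measure.pi fun e => bern (q e)

variable {q : ι → ℝ}

lemma pm_isProb (hq : ∀ e, q e ∈ Set.Icc (0:ℝ) 1) : IsProbabilityMeasure (pm q) := by
  haveI : ∀ e, IsProbabilityMeasure (bern (q e)) :=
    fun e => bern_isProb _ (hq e).1 (hq e).2
  constructor
  show Measure.pi (fun e => bern (q e)) Set.univ = 1
  exact measure_univ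

lemma pm_singleton (f : ι → Bool) : pm q {f} = ∏ e, wgt q e (f e) := by
  have : ({f} : Set (ι → Bool)) = Set.univ.pi (fun e => {f e}) := by
    ext g; simp [Set.mem_pi, funext_iff]
  rw [pm, this, Measure.pi_pi]
  refine Finset.prod_congr rfl fun e _ => ?_
  cases h : f e <;> simp [h, wgt, bern_true, bern_false]

lemma pm_eq_sum (A : Set (ι → Bool)) :
    pm q A = ∑ f ∈ Finset.univ.filter (· ∈ A), ∏ e, wgt q e (f e) := by
  have hA : A = ⋃ f ∈ Finset.univ.filter (· ∈ A), ({f} : Set (ι → Bool)) := by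
    ext g; simp
  conv_lhs => rw [hA]
  rw [measure_biUnion_finset]
  · exact Finset.sum_congr rfl fun f _ => pm_singleton f
  · intro f _ g _ hfg
    simp [Function.onFun, Set.disjoint_singleton, hfg]
  · exact fun _ _ => measurableSet_all _


end Measure

section Indep

variable {ι : Type*} [Fintype ι]

/-- A set of outcomes is determined by the coordinates in `S`. -/
def Det (S : Finset ι) (A : Set (ι → Bool)) : Prop :=
  ∀ f g : ι → Bool, (∀ e ∈ S, f e = g e) → (f ∈ A ↔ g ∈ A)

lemma Det.mono {S T : Finset ι} {A : Set (ι → Bool)} (h : Det S A) (hST : S ⊆ T) :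
    Det T A := fun f g hfg => h f g fun e he => hfg e (hST he)

lemma Det.inter {S T : Finset ι} {A B : Set (ι → Bool)} (hA : Det S A) (hB : Det T B) :
    Det (S ∪ T) (A ∩ B) := fun f g hfg => by
  have h1 := hA f g fun e he => hfg e (Finset.mem_union_left _ he)
  have h2 := hB f g fun e he => hfg e (Finset.mem_union_right _ he)
  exact and_congr h1 h2

-- independence; pure sum manipulation
lemma sum_weight_inter {M : Type*} [CommSemiring M] (w : ι → Bool → M)
    {S T : Finset ι} {A B : Set (ι → Bool)}
    (hA : Det S A) (hB : Det T B) (hd : Disjoint S T) :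
    (∑ f ∈ Finset.univ.filter (· ∈ A), ∏ e, w e (f e))
      * (∑ f ∈ Finset.univ.filter (· ∈ B), ∏ e, w e (f e))
    = (∑ f ∈ Finset.univ.filter (· ∈ A ∩ B), ∏ e, w e (f e))
      * (∑ f ∈ Finset.univ.filter (· ∈ (Set.univ : Set (ι → Bool))), ∏ e, w e (f e)) := by
  rw [Finset.sum_mul_sum, Finset.sum_mul_sum]
  rw [← Finset.sum_product', ← Finset.sum_product']
  refine Finset.sum_nbij'
    (fun p => (fun e => if e ∈ S then p.1 e else p.2 e, fun e => if e ∈ S then p.2 e else p.1 e))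
    (fun p => (fun e => if e ∈ S then p.1 e else p.2 e, fun e => if e ∈ S then p.2 e else p.1 e))
    ?_ ?_ ?_ ?_ ?_
  · rintro ⟨f, g⟩ hp
    simp only [Finset.mem_product, Finset.mem_filter, Finset.mem_univ, true_and] at hp ⊢
    obtain ⟨hfA, hgB⟩ := hp
    refine ⟨⟨?_, ?_⟩, trivial⟩
    · exact (hA f _ (fun e he => by simp [he])).mp hfA
    · refine (hB g _ (fun e he => ?_)).mp hgB
      have : e ∉ S := fun hS => (Finset.disjoint_left.mp hd hS) he
      simp [this]
  · rintro ⟨u, v⟩ hp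
    simp only [Finset.mem_product, Finset.mem_filter, Finset.mem_univ, true_and] at hp ⊢
    obtain ⟨⟨huA, huB⟩, -⟩ := hp
    constructor
    · exact (hA u _ (fun e he => by simp [he])).mp huA
    · refine (hB u _ (fun e he => ?_)).mp huB
      have : e ∉ S := fun hS => (Finset.disjoint_left.mp hd hS) he
      simp [this]
  · rintro ⟨f, g⟩ -
    ext e <;> by_cases he : e ∈ S <;> simp [he]
  · rintro ⟨u, v⟩ -
    ext e <;> by_cases he : e ∈ S <;> simp [he]
  · rintro ⟨f, g⟩ -
    simp only
    rw [← Finset.prod_mul_distrib, ← Finset.prod_mul_distrib]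
    refine Finset.prod_congr rfl fun e _ => ?_
    by_cases he : e ∈ S <;> simp [he, mul_comm]


end Indep

section PairProd
variable {ι : Type*} [Fintype ι] {q : ι → ℝ}

lemma pm_inter (hq : ∀ e, q e ∈ Set.Icc (0:ℝ) 1) {S T : Finset ι} {A B : Set (ι → Bool)}
    (hA : Det S A) (hB : Det T B) (hd : Disjoint S T) :
    pm q (A ∩ B) = pm q A * pm q B := by
  haveI := pm_isProb hq
  have hone : (∑ f : ι → Bool, ∏ e, wgt q e (f e)) = 1 := by
    have hps := Finset.prod_univ_sum (fun _ : ι => (Finset.univ : Finset Bool))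
      (fun e b => wgt q e b)
    rw [Fintype.piFinset_univ] at hps
    rw [← hps]
    have : ∀ e : ι, (∑ b : Bool, wgt q e b) = 1 := by
      intro e
      rw [Fintype.sum_bool]
      show ENNReal.ofReal (q e) + ENNReal.ofReal (1 - q e) = 1
      rw [← ENNReal.ofReal_add (hq e).1 (by have := (hq e).2; linarith)]
      norm_num
    exact Finset.prod_eq_one (fun e _ => this e)
  have key := sum_weight_inter (wgt q) hA hB hd
  have e1 := pm_eq_sum (q := q) (A ∩ B)
  have e2 := pm_eq_sum (q := q) A
  have e3 := pm_eq_sum (q := q) B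
  rw [e1, e2, e3, key]
  simp only [Set.mem_univ, Finset.filter_true]
  rw [hone, mul_one]
  exact Finset.sum_congr (Finset.ext fun f => by simp) fun _ _ => rfl

lemma pm_coord (hq : ∀ e, q e ∈ Set.Icc (0:ℝ) 1) (e : ι) (b : Bool) :
    pm q {ω : ι → Bool | ω e = b} = wgt q e b := by
  have hset : {ω : ι → Bool | ω e = b}
      = Set.univ.pi (fun e' => if e' = e then ({b} : Set Bool) else Set.univ) := by
    ext g
    simp only [Set.mem_setOf_eq, Set.mem_pi, Set.mem_univ, true_implies]
    constructor
    · intro h e'; by_cases he : e' = e <;> simp [he, h]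
    · intro h; have := h e; simpa using this
  rw [pm, hset, Measure.pi_pi]
  rw [Finset.prod_eq_single e]
  · simp only [if_pos rfl]
    cases b
    · exact bern_false _
    · exact bern_true _
  · intro e' _ he
    rw [if_neg he]
    exact bern_univ _ (hq e').1 (hq e').2
  · simp

lemma Det.coord (e : ι) (b : Bool) : Det {e} {ω : ι → Bool | ω e = b} := by
  intro f g h
  have := h e (Finset.mem_singleton_self e)
  simp [this]

lemma pm_pair_compl (hq : ∀ e, q e ∈ Set.Icc (0:ℝ) 1) {e₁ e₂ : ι} (hne : e₁ ≠ e₂) :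
    pm q {ω : ι → Bool | ¬(ω e₁ = true ∧ ω e₂ = true)}
      = 1 - ENNReal.ofReal (q e₁) * ENNReal.ofReal (q e₂) := by
  haveI := pm_isProb hq
  have hc : {ω : ι → Bool | ¬(ω e₁ = true ∧ ω e₂ = true)}
      = ({ω : ι → Bool | ω e₁ = true} ∩ {ω : ι → Bool | ω e₂ = true})ᶜ := by
    ext ω; simp [Set.mem_compl_iff]
  rw [hc, measure_compl (measurableSet_all _) (measure_ne_top _ _)]
  rw [pm_inter hq (Det.coord e₁ true) (Det.coord e₂ true) (by simp [hne, Ne.symm hne])]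
  rw [pm_coord hq, pm_coord hq, measure_univ]
  rfl

/-- Product formula for the "no common neighbour" event. -/
lemma pm_pairs_prod (hq : ∀ e, q e ∈ Set.Icc (0:ℝ) 1) {κ : Type*} [Fintype κ]
    (e₁ e₂ : κ → ι) (s : Finset κ)
    (hne : ∀ a ∈ s, e₁ a ≠ e₂ a)
    (hcross : ∀ a ∈ s, ∀ b ∈ s, a ≠ b →
      e₁ a ≠ e₁ b ∧ e₁ a ≠ e₂ b ∧ e₂ a ≠ e₁ b ∧ e₂ a ≠ e₂ b) :
    pm q {ω : ι → Bool | ∀ w ∈ s, ¬(ω (e₁ w) = true ∧ ω (e₂ w) = true)}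
      = ∏ w ∈ s, (1 - ENNReal.ofReal (q (e₁ w)) * ENNReal.ofReal (q (e₂ w))) := by
  haveI := pm_isProb hq
  induction s using Finset.induction_on with
  | empty => simp
  | @insert a s ha ih =>
    have hset : {ω : ι → Bool | ∀ w ∈ insert a s, ¬(ω (e₁ w) = true ∧ ω (e₂ w) = true)}
        = {ω : ι → Bool | ¬(ω (e₁ a) = true ∧ ω (e₂ a) = true)}
          ∩ {ω : ι → Bool | ∀ w ∈ s, ¬(ω (e₁ w) = true ∧ ω (e₂ w) = true)} := by
      ext ω
      simp only [Set.mem_setOf_eq, Set.mem_inter_iff, Finset.mem_insert]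
      constructor
      · intro h; exact ⟨h a (Or.inl rfl), fun w hw => h w (Or.inr hw)⟩
      · rintro ⟨h1, h2⟩ w hw
        rcases hw with rfl | hw
        · exact h1
        · exact h2 w hw
    have hDa : Det ({e₁ a, e₂ a} : Finset ι)
        {ω : ι → Bool | ¬(ω (e₁ a) = true ∧ ω (e₂ a) = true)} := by
      intro f g h
      have h1 := h (e₁ a) (by simp)
      have h2 := h (e₂ a) (by simp)
      simp [Set.mem_setOf_eq, h1, h2]
    have hDs : Det (s.biUnion fun w => {e₁ w, e₂ w})
        {ω : ι → Bool | ∀ w ∈ s, ¬(ω (e₁ w) = true ∧ ω (e₂ w) = true)} := by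
      intro f g h
      simp only [Set.mem_setOf_eq]
      constructor
      · intro hf w hw
        have h1 := h (e₁ w) (Finset.mem_biUnion.mpr ⟨w, hw, by simp⟩)
        have h2 := h (e₂ w) (Finset.mem_biUnion.mpr ⟨w, hw, by simp⟩)
        rw [← h1, ← h2]; exact hf w hw
      · intro hg w hw
        have h1 := h (e₁ w) (Finset.mem_biUnion.mpr ⟨w, hw, by simp⟩)
        have h2 := h (e₂ w) (Finset.mem_biUnion.mpr ⟨w, hw, by simp⟩)
        rw [h1, h2]; exact hg w hw
    have hdisj : Disjoint ({e₁ a, e₂ a} : Finset ι) (s.biUnion fun w => {e₁ w, e₂ w}) := by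
      rw [Finset.disjoint_left]
      intro e he hbi
      rcases Finset.mem_biUnion.mp hbi with ⟨w, hw, hew⟩
      have haw : a ≠ w := fun h => ha (h ▸ hw)
      have hc := hcross a (Finset.mem_insert_self a _) w (Finset.mem_insert_of_mem hw) haw
      rcases Finset.mem_insert.mp he with rfl | he'
      · rcases Finset.mem_insert.mp hew with h' | h'
        · exact hc.1 h'
        · exact hc.2.1 (Finset.mem_singleton.mp h')
      · rw [Finset.mem_singleton] at he'
        subst he'
        rcases Finset.mem_insert.mp hew with h' | h'
        · exact hc.2.2.1 h'
        · exact hc.2.2.2 (Finset.mem_singleton.mp h')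
    rw [hset, pm_inter hq hDa hDs hdisj,
      pm_pair_compl hq (hne a (Finset.mem_insert_self a _)),
      ih (fun w hw => hne w (Finset.mem_insert_of_mem hw))
        (fun w hw w' hw' => hcross w (Finset.mem_insert_of_mem hw) w' (Finset.mem_insert_of_mem hw')),
      Finset.prod_insert ha]


end PairProd

section Walks
variable {k : ℕ} (P : Matrix (Fin k) (Fin k) ℝ)

/-- `Q = P²` entrywise. -/
def QM (i j : Fin k) : ℝ := ∑ m, P i m * P m j

/-- walks of length `n` in the positivity graph of `P`. -/
def wk : ℕ → Fin k → Fin k → Prop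
  | 0 => fun a b => a = b
  | (n+1) => fun a b => ∃ c, 0 < P a c ∧ wk n c b

variable {P}

lemma wk_trans {m n : ℕ} {a b c : Fin k} (h1 : wk P m a b) (h2 : wk P n b c) :
    wk P (m + n) a c := by
  induction m generalizing a with
  | zero => rw [show (0 + n) = n by omega]; exact h1 ▸ h2
  | succ m ih =>
    obtain ⟨d, hd, hw⟩ := h1
    rw [show m + 1 + n = (m + n) + 1 from by omega]
    exact ⟨d, hd, ih hw⟩

lemma wk_append {n : ℕ} {a b c : Fin k} (h1 : wk P n a b) (h2 : 0 < P b c) :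
    wk P (n + 1) a c :=
  wk_trans h1 ⟨c, h2, rfl⟩

lemma wk_symm (hs : P.IsSymm) {n : ℕ} {a b : Fin k} (h : wk P n a b) : wk P n b a := by
  induction n generalizing a b with
  | zero => exact h.symm
  | succ n ih =>
    obtain ⟨c, hc, hw⟩ := h
    have : 0 < P c a := by rwa [show P c a = P a c from hs.apply a c] 
    exact wk_append (ih hw) this

lemma wk_of_reflTransGen {a b : Fin k}
    (h : Relation.ReflTransGen (fun x y => 0 < P x y) a b) : ∃ n, wk P n a b := by
  induction h with
  | refl => exact ⟨0, rfl⟩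
  | tail _ hstep ih => obtain ⟨n, hn⟩ := ih; exact ⟨n + 1, wk_append hn hstep⟩

lemma qm_pos_of_wk2 (h01 : ∀ i j, P i j ∈ Set.Icc (0:ℝ) 1) {a b : Fin k}
    (h : wk P 2 a b) : 0 < QM P a b := by
  obtain ⟨c, hc, d, hd, hdb⟩ := h
  subst hdb
  have hterm : 0 < P a c * P c d := mul_pos hc hd
  refine Finset.sum_pos' (fun m _ => mul_nonneg (h01 a m).1 (h01 m d).1) ⟨c, Finset.mem_univ c, hterm⟩

lemma qrtg_of_even_wk (h01 : ∀ i j, P i j ∈ Set.Icc (0:ℝ) 1) :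
    ∀ n, ∀ {a b : Fin k}, Even n → wk P n a b →
      Relation.ReflTransGen (fun x y => 0 < QM P x y) a b := by
  intro n
  induction n using Nat.strong_induction_on with
  | _ n ih =>
    intro a b hev hw
    rcases n with _ | _ | n
    · exact hw ▸ Relation.ReflTransGen.refl
    · exact absurd hev (by simp)
    · obtain ⟨c, hc, d, hd, hw'⟩ := hw
      have h2 : 0 < QM P a d := qm_pos_of_wk2 h01 ⟨c, hc, d, hd, rfl⟩
      have hev' : Even n := by
        rcases hev with ⟨r, hr⟩
        exact ⟨r - 1, by omega⟩
      exact Relation.ReflTransGen.head h2 (ih n (by omega) hev' hw')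

/-- connect + non-bipartite gives: all pairs joined by even walks. -/
lemma qReach (h01 : ∀ i j, P i j ∈ Set.Icc (0:ℝ) 1) (hs : P.IsSymm)
    (hconn : ∀ i j : Fin k, Relation.ReflTransGen (fun a b => 0 < P a b) i j)
    (hnb : ¬ ∃ f : Fin k → Bool, ∀ i j : Fin k, 0 < P i j → f i ≠ f j)
    (hk : 0 < k) :
    ∀ a b : Fin k, Relation.ReflTransGen (fun x y => 0 < QM P x y) a b := by
  set a₀ : Fin k := ⟨0, hk⟩
  by_cases hx : ∃ x : Fin k, (∃ n, Even n ∧ wk P n a₀ x) ∧ (∃ n, Odd n ∧ wk P n a₀ x)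
  · -- both-parity vertex exists: every pair has even walk
    obtain ⟨x, ⟨ne, hne, hwe⟩, ⟨no, hno, hwo⟩⟩ := hx
    intro a b
    obtain ⟨m₁, hm₁⟩ := wk_of_reflTransGen (hconn a₀ a)
    obtain ⟨m₂, hm₂⟩ := wk_of_reflTransGen (hconn a₀ b)
    -- walk a → a₀ → b, with parity fix via a₀→x→a₀ odd loop
    have hwa : wk P m₁ a a₀ := wk_symm hs hm₁
    by_cases hp : Even (m₁ + m₂)
    · exact qrtg_of_even_wk h01 (m₁ + m₂) hp (wk_trans hwa hm₂)
    · have hloop : wk P (ne + no) a₀ a₀ := wk_trans hwe (wk_symm hs hwo)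
      have : wk P (m₁ + (ne + no) + m₂) a b := wk_trans (wk_trans hwa hloop) hm₂
      refine qrtg_of_even_wk h01 _ ?_ this
      rcases hne with ⟨re, hre⟩
      rcases hno with ⟨ro, hro⟩
      have h1 : (m₁ + m₂) % 2 = 1 := Nat.odd_iff.mp (Nat.not_even_iff_odd.mp hp)
      rw [Nat.even_iff]
      omega
  · -- otherwise parity coloring is proper: contradiction
    exfalso
    apply hnb
    refine ⟨fun b => if (∃ n, Even n ∧ wk P n a₀ b) then true else false, ?_⟩
    intro i j hij
    have htot : ∀ b : Fin k, (∃ n, Even n ∧ wk P n a₀ b) ∨ (∃ n, Odd n ∧ wk P n a₀ b) := by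
      intro b
      obtain ⟨n, hn⟩ := wk_of_reflTransGen (hconn a₀ b)
      rcases Nat.even_or_odd n with h | h
      · exact Or.inl ⟨n, h, hn⟩
      · exact Or.inr ⟨n, h, hn⟩
    by_cases hi : ∃ n, Even n ∧ wk P n a₀ i
    · by_cases hj : ∃ n, Even n ∧ wk P n a₀ j
      · -- then j has both parities
        obtain ⟨n, hn, hw⟩ := hi
        have hodd : ∃ n, Odd n ∧ wk P n a₀ j :=
          ⟨n + 1, by simpa [Nat.odd_add_one] using hn, wk_append hw hij⟩
        exact (hx ⟨j, hj, hodd⟩).elim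
      · simp [hi, hj]
    · by_cases hj : ∃ n, Even n ∧ wk P n a₀ j
      · simp [hi, hj]
      · -- i odd-reachable, step gives j even-reachable: contra
        rcases htot i with h | h
        · exact absurd h hi
        · obtain ⟨n, hn, hw⟩ := h
          exact absurd ⟨n + 1, by simpa [Nat.even_add_one] using hn, wk_append hw hij⟩ hj

/-- drop equal steps to get the `≠` refinement -/
lemma rtg_ne {α : Type*} {r : α → α → Prop} {a b : α} (h : Relation.ReflTransGen r a b) :
    Relation.ReflTransGen (fun x y => x ≠ y ∧ r x y) a b := by
  induction h with
  | refl => exact Relation.ReflTransGen.refl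
  | tail _ hstep ih =>
    rename_i b' c' _
    by_cases hbc : b' = c'
    · exact hbc ▸ ih
    · exact Relation.ReflTransGen.tail ih ⟨hbc, hstep⟩


end Walks

section Symbols
variable {k : ℕ} (P : Matrix (Fin k) (Fin k) ℝ)

/-- a symbol is good if its row has at least two positive entries -/
def goodS (i : Fin k) : Prop := 1 < (Finset.univ.filter fun j => 0 < P i j).card

/-- backbone partner -/
def bb (hB : ∀ i : Fin k, ∃ j : Fin k, P i j = 1) (i : Fin k) : Fin k :=
  Classical.choose (hB i)

variable {P}
variable {hB : ∀ i : Fin k, ∃ j : Fin k, P i j = 1}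

lemma bb_spec (i : Fin k) : P i (bb P hB i) = 1 := Classical.choose_spec (hB i)

lemma reach_closed {C : Set (Fin k)} (hC : ∀ a ∈ C, ∀ b, 0 < P a b → b ∈ C)
    {i j : Fin k} (hi : i ∈ C)
    (h : Relation.ReflTransGen (fun a b => 0 < P a b) i j) : j ∈ C := by
  induction h with
  | refl => exact hi
  | tail _ hstep ih => exact hC _ ih _ hstep

lemma bad_unique {i : Fin k} (hbad : ¬ goodS P i) : ∀ j, 0 < P i j → j = bb P hB i := by
  intro j hj
  have hcard : (Finset.univ.filter fun j => 0 < P i j).card ≤ 1 := by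
    by_contra h
    exact hbad (by unfold goodS; omega)
  have hjmem : j ∈ Finset.univ.filter fun j => 0 < P i j := by simp [hj]
  have hbmem : bb P hB i ∈ Finset.univ.filter fun j => 0 < P i j := by
    simp [bb_spec (hB := hB) i]
  exact Finset.card_le_one.mp hcard j hjmem _ hbmem

section WithHyps
variable (hsymm : P.IsSymm)
  (hconn : ∀ i j : Fin k, Relation.ReflTransGen (fun a b => 0 < P a b) i j)
  (hnb : ¬ ∃ f : Fin k → Bool, ∀ i j : Fin k, 0 < P i j → f i ≠ f j)
  (hk2 : 1 < k)

include hsymm hconn hnb hk2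

lemma bb_ne_of_bad {i : Fin k} (hbad : ¬ goodS P i) : bb P hB i ≠ i := by
  intro heq
  obtain ⟨j, hj⟩ := Fintype.exists_ne_of_one_lt_card (by simpa using hk2) i
  have : j ∈ ({i} : Set (Fin k)) := by
    refine reach_closed ?_ rfl (hconn i j)
    rintro a ha b hab
    rw [Set.mem_singleton_iff] at ha
    subst ha
    have := bad_unique (hB := hB) hbad b hab
    rw [heq] at this
    exact this
  exact hj this

lemma good_bb_of_bad {i : Fin k} (hbad : ¬ goodS P i) : goodS P (bb P hB i) := by
  by_contra hbad2
  set j := bb P hB i with hj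
  have hne : j ≠ i := bb_ne_of_bad hsymm hconn hnb hk2 hbad
  have hPji : 0 < P j i := by
    rw [hsymm.apply i j]
    rw [bb_spec (hB := hB) i]
    norm_num
  have hbbj : bb P hB j = i := (bad_unique (hB := hB) hbad2 i hPji).symm
  -- the set {i, j} is closed under positive steps
  have hclosed : ∀ a ∈ ({i, j} : Set (Fin k)), ∀ b, 0 < P a b → b ∈ ({i, j} : Set (Fin k)) := by
    rintro a ha b hab
    rcases ha with rfl | ha
    · right
      exact bad_unique (hB := hB) hbad b hab
    · rw [Set.mem_singleton_iff] at ha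
      subst ha
      left
      rw [← hbbj]
      exact bad_unique (hB := hB) hbad2 b hab
  by_cases hall : ∀ x : Fin k, x = i ∨ x = j
  · -- bipartite contradiction
    apply hnb
    refine ⟨fun x => if x = i then true else false, ?_⟩
    intro a b hab
    rcases hall a with rfl | rfl
    · have hbj : b = j := bad_unique (hB := hB) hbad b hab
      subst hbj
      simp [hne]
    · have hbi : b = i := by rw [← hbbj]; exact bad_unique (hB := hB) hbad2 b hab
      subst hbi
      simp [hne]
  · push_neg at hall
    obtain ⟨x, hxi, hxj⟩ := hall
    have : x ∈ ({i, j} : Set (Fin k)) := reach_closed hclosed (by left; rfl) (hconn i x)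
    rcases this with h | h
    · exact hxi h
    · exact hxj h

include hB in
lemma exists_good : ∃ i, goodS P i := by
  by_cases h : goodS P (⟨0, by omega⟩ : Fin k)
  · exact ⟨_, h⟩
  · exact ⟨_, good_bb_of_bad (hB := hB) hsymm hconn hnb hk2 h⟩

end WithHyps

end Symbols

section Paths
variable {k : ℕ} (P : Matrix (Fin k) (Fin k) ℝ)

def Gcnt {t : ℕ} (x : Fin t → Fin k) : Finset (Fin t) :=
  Finset.univ.filter fun l => goodS P (x l)

variable {P}
variable {hB : ∀ i : Fin k, ∃ j : Fin k, P i j = 1}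

include hB

section Main
variable (h01 : ∀ i j, P i j ∈ Set.Icc (0:ℝ) 1) (hsymm : P.IsSymm)

include h01

lemma QM_nonneg (i j : Fin k) : 0 ≤ QM P i j :=
  Finset.sum_nonneg fun m _ => mul_nonneg (h01 i m).1 (h01 m j).1

include hsymm

lemma QM_diag_ge_one (i : Fin k) : 1 ≤ QM P i i := by
  have hterm : P i (bb P hB i) * P (bb P hB i) i = 1 := by
    rw [hsymm.apply i (bb P hB i), bb_spec (hB := hB)]
    norm_num
  calc (1:ℝ) = P i (bb P hB i) * P (bb P hB i) i := hterm.symm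
    _ ≤ QM P i i :=
        Finset.single_le_sum (fun m _ => mul_nonneg (h01 i m).1 (h01 m i).1) (Finset.mem_univ _)

lemma QM_diag_good {p : ℝ} (hp0 : 0 ≤ p) (hple : ∀ i j, 0 < P i j → p ≤ P i j)
    {i : Fin k} (hg : goodS P i) : 1 + p ^ 2 ≤ QM P i i := by
  obtain ⟨j, hjmem, hjne⟩ := Finset.exists_mem_ne hg (bb P hB i)
  simp only [Finset.mem_filter] at hjmem
  have hj : 0 < P i j := hjmem.2
  have h1 : P i (bb P hB i) * P (bb P hB i) i = 1 := by
    rw [hsymm.apply i (bb P hB i), bb_spec (hB := hB)]; norm_num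
  have h2 : p ^ 2 ≤ P i j * P j i := by
    rw [hsymm.apply i j, sq]
    have := hple i j hj
    nlinarith
  have hpair : ∑ m ∈ ({bb P hB i, j} : Finset (Fin k)), P i m * P m i
      = P i (bb P hB i) * P (bb P hB i) i + P i j * P j i :=
    Finset.sum_pair (Ne.symm hjne)
  calc 1 + p ^ 2 ≤ P i (bb P hB i) * P (bb P hB i) i + P i j * P j i := by rw [h1]; linarith
    _ = ∑ m ∈ ({bb P hB i, j} : Finset (Fin k)), P i m * P m i := hpair.symm
    _ ≤ QM P i i := Finset.sum_le_sum_of_subset_of_nonneg (Finset.subset_univ _)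
        (fun m _ _ => mul_nonneg (h01 i m).1 (h01 m i).1)

omit hsymm h01

lemma exists_pmin (hk : 0 < k) : ∃ p : ℝ, 0 < p ∧ ∀ i j, 0 < P i j → p ≤ P i j := by
  have hne : (Finset.univ.filter fun q : Fin k × Fin k => 0 < P q.1 q.2).Nonempty := by
    refine ⟨(⟨0, hk⟩, bb P hB ⟨0, hk⟩), ?_⟩
    simp only [Finset.mem_filter, Finset.mem_univ, true_and]
    rw [bb_spec (hB := hB)]
    norm_num
  refine ⟨(Finset.univ.filter fun q : Fin k × Fin k => 0 < P q.1 q.2).inf' hne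
    (fun q => P q.1 q.2), ?_, ?_⟩
  · rw [Finset.lt_inf'_iff]
    intro q hq
    exact (Finset.mem_filter.mp hq).2
  · intro i j h
    exact Finset.inf'_le (fun q => _) (Finset.mem_filter.mpr ⟨Finset.mem_univ (i, j), h⟩)

include h01 hsymm in
lemma exists_qmin (hk : 0 < k) : ∃ p : ℝ, 0 < p ∧ ∀ i j, 0 < QM P i j → p ≤ QM P i j := by
  have hne : (Finset.univ.filter fun q : Fin k × Fin k => 0 < QM P q.1 q.2).Nonempty := by
    refine ⟨(⟨0, hk⟩, ⟨0, hk⟩), ?_⟩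
    simp only [Finset.mem_filter, Finset.mem_univ, true_and]
    have := QM_diag_ge_one (hB := hB) h01 hsymm (⟨0, hk⟩ : Fin k)
    linarith
  refine ⟨(Finset.univ.filter fun q : Fin k × Fin k => 0 < QM P q.1 q.2).inf' hne
    (fun q => QM P q.1 q.2), ?_, ?_⟩
  · rw [Finset.lt_inf'_iff]
    intro q hq
    exact (Finset.mem_filter.mp hq).2
  · intro i j h
    exact Finset.inf'_le (fun q => _) (Finset.mem_filter.mpr ⟨Finset.mem_univ (i, j), h⟩)

-- Gcnt bookkeeping
variable {t : ℕ}

lemma Gcnt_update_superset (x : Fin t → Fin k) (c : Fin t) (j : Fin k) :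
    (Gcnt P x).erase c ⊆ Gcnt P (Function.update x c j) := by
  intro l hl
  rw [Finset.mem_erase] at hl
  obtain ⟨hlc, hlg⟩ := hl
  simp only [Gcnt, Finset.mem_filter, Finset.mem_univ, true_and] at hlg ⊢
  rwa [Function.update_of_ne hlc]

lemma Gcnt_update_card_ge (x : Fin t → Fin k) (c : Fin t) (j : Fin k) :
    (Gcnt P x).card - 1 ≤ (Gcnt P (Function.update x c j)).card := by
  calc (Gcnt P x).card - 1 ≤ ((Gcnt P x).erase c).card := by
        rcases Finset.decidableMem c (Gcnt P x) with h | h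
        · simp [Finset.erase_eq_of_notMem h]
        · rw [Finset.card_erase_of_mem h]
  _ ≤ _ := Finset.card_le_card (Gcnt_update_superset (hB := hB) x c j)

lemma Gcnt_update_card_good (x : Fin t → Fin k) (c : Fin t) {j : Fin k} (hj : goodS P j) :
    (Gcnt P x).card ≤ (Gcnt P (Function.update x c j)).card := by
  have hsub : insert c ((Gcnt P x).erase c) ⊆ Gcnt P (Function.update x c j) := by
    intro l hl
    rcases Finset.mem_insert.mp hl with rfl | hl
    · simp only [Gcnt, Finset.mem_filter, Finset.mem_univ, true_and]
      rwa [Function.update_self]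
    · exact Gcnt_update_superset (hB := hB) x c j hl
  calc (Gcnt P x).card ≤ (insert c ((Gcnt P x).erase c)).card := by
        rcases Finset.decidableMem c (Gcnt P x) with h | h
        · rw [Finset.card_insert_of_notMem (by simp), Finset.erase_eq_of_notMem h]
          omega
        · rw [Finset.card_insert_of_notMem (by simp), Finset.card_erase_of_mem h]
          have := Finset.card_pos.mpr ⟨c, h⟩
          omega
    _ ≤ _ := Finset.card_le_card hsub

-- the product bound for a single-coordinate move
include h01 hsymm in
lemma prodQ_step {q R : ℝ} (hq0 : 0 ≤ q) (hR1 : 1 ≤ R)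
    (hqle : ∀ i j, 0 < QM P i j → q ≤ QM P i j)
    (hRle : ∀ i, goodS P i → R ≤ QM P i i)
    (x : Fin t → Fin k) (c : Fin t) {j : Fin k} (hQpos : 0 < QM P (x c) j) :
    q * R ^ ((Gcnt P x).card - 1) ≤ ∏ l, QM P (x l) (Function.update x c j l) := by
  have hprod : ∏ l, QM P (x l) (Function.update x c j l)
      = QM P (x c) j * ∏ l ∈ Finset.univ.erase c, QM P (x l) (x l) := by
    rw [← Finset.mul_prod_erase Finset.univ _ (Finset.mem_univ c)]
    congr 1
    · rw [Function.update_self]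
    · refine Finset.prod_congr rfl fun l hl => ?_
      rw [Function.update_of_ne (Finset.mem_erase.mp hl).1]
  rw [hprod]
  have h1 : R ^ ((Gcnt P x).card - 1) ≤ ∏ l ∈ Finset.univ.erase c, QM P (x l) (x l) := by
    calc R ^ ((Gcnt P x).card - 1)
        ≤ R ^ ((Gcnt P x).erase c).card := by
          apply pow_le_pow_right₀ hR1
          rcases Finset.decidableMem c (Gcnt P x) with h | h
          · simp [Finset.erase_eq_of_notMem h]
          · rw [Finset.card_erase_of_mem h]
      _ = ∏ _l ∈ (Gcnt P x).erase c, R := by rw [Finset.prod_const]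
      _ ≤ ∏ l ∈ (Gcnt P x).erase c, QM P (x l) (x l) := by
          refine Finset.prod_le_prod (fun l _ => by linarith) fun l hl => ?_
          apply hRle
          have := Finset.mem_erase.mp hl
          simpa [Gcnt] using this.2
      _ ≤ ∏ l ∈ Finset.univ.erase c, QM P (x l) (x l) := by
          have hsub : (Gcnt P x).erase c ⊆ Finset.univ.erase c :=
            Finset.erase_subset_erase c (Finset.subset_univ _)
          rw [← Finset.prod_sdiff hsub]
          have hone : (1:ℝ) ≤ ∏ l ∈ (Finset.univ.erase c) \ ((Gcnt P x).erase c),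
              QM P (x l) (x l) := by
            have := Finset.prod_le_prod (s := (Finset.univ.erase c) \ ((Gcnt P x).erase c))
              (f := fun _ => (1:ℝ)) (g := fun l => QM P (x l) (x l))
              (fun _ _ => zero_le_one) (fun l _ => QM_diag_ge_one (hB := hB) h01 hsymm (x l))
            simpa using this
          have hnn : (0:ℝ) ≤ ∏ l ∈ (Gcnt P x).erase c, QM P (x l) (x l) :=
            Finset.prod_nonneg fun l _ => QM_nonneg (hB := hB) h01 (x l) (x l)
          nlinarith
  have hqQ : q ≤ QM P (x c) j := hqle _ _ hQpos
  have hpos : (0:ℝ) ≤ ∏ l ∈ Finset.univ.erase c, QM P (x l) (x l) :=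
    Finset.prod_nonneg fun l _ => QM_nonneg (hB := hB) h01 (x l) (x l)
  have hRpow : (0:ℝ) ≤ R ^ ((Gcnt P x).card - 1) := by positivity
  nlinarith


def StepR (m : ℕ) {t : ℕ} (x y : Fin t → Fin k) : Prop :=
  (∃ c j', y = Function.update x c j' ∧ x c ≠ j' ∧ 0 < QM P (x c) j')
    ∧ m ≤ (Gcnt P x).card + 1 ∧ m ≤ (Gcnt P y).card + 1

omit h01 hsymm

lemma conv_coord (m : ℕ) (x : Fin t → Fin k) (c : Fin t) (i₀ : Fin k)
    (hreach : Relation.ReflTransGen (fun a b => a ≠ b ∧ 0 < QM P a b) (x c) i₀)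
    (hm : m ≤ (Gcnt P x).card) :
    Relation.ReflTransGen (StepR (P := P) m) x (Function.update x c i₀) := by
  have key : ∀ s : Fin k, Relation.ReflTransGen (fun a b => a ≠ b ∧ 0 < QM P a b) s i₀ →
      Relation.ReflTransGen (StepR (P := P) m)
        (Function.update x c s) (Function.update x c i₀) := by
    intro s hs
    induction hs using Relation.ReflTransGen.head_induction_on with
    | refl => exact Relation.ReflTransGen.refl
    | head hstep htail ih =>
      rename_i a b
      have hbound : ∀ s' : Fin k, m ≤ (Gcnt P (Function.update x c s')).card + 1 := by
        intro s'
        have := Gcnt_update_card_ge (hB := hB) x c s'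
        omega
      refine Relation.ReflTransGen.head ⟨⟨c, b, ?_, ?_, ?_⟩, hbound a, hbound b⟩ ih
      · rw [Function.update_idem]
      · rw [Function.update_self]; exact hstep.1
      · rw [Function.update_self]; exact hstep.2
  have := key (x c) hreach
  rwa [Function.update_eq_self] at this

lemma path_to_z (m : ℕ) {i₀ : Fin k} (hi₀ : goodS P i₀)
    (hreach : ∀ a : Fin k, Relation.ReflTransGen (fun a b => a ≠ b ∧ 0 < QM P a b) a i₀) :
    ∀ n (x : Fin t → Fin k), (Finset.univ.filter fun l => x l ≠ i₀).card = n →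
      m ≤ (Gcnt P x).card →
      Relation.ReflTransGen (StepR (P := P) m) x (fun _ => i₀) := by
  intro n
  induction n using Nat.strong_induction_on with
  | _ n ih =>
    intro x hcard hm
    rcases Nat.eq_zero_or_pos n with rfl | hpos
    · have hx : x = fun _ => i₀ := by
        funext l
        by_contra h
        have : l ∈ Finset.univ.filter fun l => x l ≠ i₀ := by simp [h]
        rw [Finset.card_eq_zero.mp hcard] at this
        exact absurd this (Finset.notMem_empty l)
      exact hx ▸ Relation.ReflTransGen.refl
    · have hne : (Finset.univ.filter fun l => x l ≠ i₀).Nonempty :=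
        Finset.card_pos.mp (by omega)
      obtain ⟨c, hc⟩ := hne
      have hxc : x c ≠ i₀ := (Finset.mem_filter.mp hc).2
      have h1 := conv_coord (hB := hB) m x c i₀ (hreach (x c)) hm
      have hg' : m ≤ (Gcnt P (Function.update x c i₀)).card :=
        hm.trans (Gcnt_update_card_good (hB := hB) x c hi₀)
      have hset : (Finset.univ.filter fun l => Function.update x c i₀ l ≠ i₀)
          = (Finset.univ.filter fun l => x l ≠ i₀).erase c := by
        ext l
        rcases eq_or_ne l c with rfl | hlc
        · simp [Function.update_self]
        · simp [Function.update_of_ne hlc, hlc]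
      have hcard' : (Finset.univ.filter fun l => Function.update x c i₀ l ≠ i₀).card = n - 1 := by
        rw [hset, Finset.card_erase_of_mem hc, hcard]
      exact h1.trans (ih (n - 1) (by omega) _ hcard' hg')

end Main

end Paths

end SKGProof

namespace SKGProof
open SKG

section Glue
variable {k t : ℕ} {P : Matrix (Fin k) (Fin k) ℝ}

lemma symProb_eq_pk (hsymm : P.IsSymm) (u v : Fin t → Fin k) :
    symProb P t s(u, v) = pk P t u v := by
  rw [symProb, Sym2.lift_mk]
  show (∏ l, (P (u l) (v l) + P (v l) (u l)) / 2) = ∏ l, P (u l) (v l)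
  refine Finset.prod_congr rfl fun l _ => ?_
  rw [show P (v l) (u l) = P (u l) (v l) from hsymm.apply (u l) (v l)]
  ring

lemma pk_nonneg (h01 : ∀ i j, P i j ∈ Set.Icc (0:ℝ) 1) (u v : Fin t → Fin k) :
    0 ≤ pk P t u v := Finset.prod_nonneg fun l _ => (h01 _ _).1

lemma pk_le_one (h01 : ∀ i j, P i j ∈ Set.Icc (0:ℝ) 1) (u v : Fin t → Fin k) :
    pk P t u v ≤ 1 :=
  Finset.prod_le_one (fun l _ => (h01 _ _).1) (fun l _ => (h01 _ _).2)

lemma symProb_mem (h01 : ∀ i j, P i j ∈ Set.Icc (0:ℝ) 1) (e : Sym2 (Fin t → Fin k)) :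
    symProb P t e ∈ Set.Icc (0:ℝ) 1 := by
  induction e using Sym2.ind with
  | _ u v =>
    rw [symProb, Sym2.lift_mk]
    show (∏ l, (P (u l) (v l) + P (v l) (u l)) / 2) ∈ Set.Icc (0:ℝ) 1
    constructor
    · refine Finset.prod_nonneg fun l _ => ?_
      have h1 := (h01 (u l) (v l)).1
      have h2 := (h01 (v l) (u l)).1
      linarith
    · refine Finset.prod_le_one (fun l _ => ?_) (fun l _ => ?_)
      · have h1 := (h01 (u l) (v l)).1
        have h2 := (h01 (v l) (u l)).1
        linarith
      · have h1 := (h01 (u l) (v l)).2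
        have h2 := (h01 (v l) (u l)).2
        linarith

lemma sum_pk_mul (x y : Fin t → Fin k) :
    ∑ w : Fin t → Fin k, pk P t x w * pk P t w y = ∏ l, QM P (x l) (y l) := by
  have h2 : ∀ w : Fin t → Fin k, pk P t x w * pk P t w y
      = ∏ l, (P (x l) (w l) * P (w l) (y l)) := by
    intro w
    rw [pk, pk, ← Finset.prod_mul_distrib]
  have key := Finset.prod_univ_sum (fun _ : Fin t => (Finset.univ : Finset (Fin k)))
      (fun l j => P (x l) j * P j (y l))
  rw [Fintype.piFinset_univ] at key
  calc ∑ w : Fin t → Fin k, pk P t x w * pk P t w y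
      = ∑ w : Fin t → Fin k, ∏ l, (P (x l) (w l) * P (w l) (y l)) :=
        Finset.sum_congr rfl fun w _ => h2 w
    _ = ∏ l, ∑ j, P (x l) j * P j (y l) := key.symm
    _ = ∏ l, QM P (x l) (y l) := rfl

end Glue
end SKGProof

set_option maxHeartbeats 4000000

/-- Suppose `W` is connected and non-bipartite, `c₁ = 1`, and the
backbone graph `B` has no vertex of degree zero (every `i` has some `j` with
`P i j = 1`).  Then there are `d > 1`, `c > 0` and `t₀`, depending only on `P`, such
that for all `t ≥ t₀` the graph `G` is connected with probability at least
`1 − e^{−c d^t}`. -/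
theorem stmt18 (k : ℕ) (hk : 0 < k) (P : Matrix (Fin k) (Fin k) ℝ) (hsymm : P.IsSymm)
    (h01 : ∀ i j, P i j ∈ Set.Icc (0 : ℝ) 1)
    (hmono : Monotone (SKG.colSum P)) (hc1 : SKG.colSum P ⟨0, hk⟩ = 1)
    (hconn : SKG.connectedW P) (hnb : SKG.nonBipartiteW P)
    (hB : ∀ i : Fin k, ∃ j : Fin k, P i j = 1) :
    ∃ d > (1 : ℝ), ∃ c > (0 : ℝ), ∃ t₀ : ℕ, ∀ t ≥ t₀,
      ENNReal.ofReal (1 - Real.exp (-c * d ^ t)) ≤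
        SKG.skg P t {ω | (SKG.graphOf ω).Connected} := by
  classical
  rcases Nat.lt_or_ge k 2 with hk2 | hk2
  · -- degenerate case k = 1 : a single vertex, always connected
    refine ⟨2, one_lt_two, 1, one_pos, 1, fun t _ => ?_⟩
    have hk1 : k = 1 := by omega
    subst hk1
    have hss : Subsingleton (Fin t → Fin 1) :=
      ⟨fun a b => funext fun l => Subsingleton.elim _ _⟩
    have huniv : {ω : Sym2 (Fin t → Fin 1) → Bool | (SKG.graphOf ω).Connected} = Set.univ := by
      ext ω
      simp only [Set.mem_setOf_eq, Set.mem_univ, iff_true]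
      haveI : Nonempty (Fin t → Fin 1) := ⟨fun _ => ⟨0, hk⟩⟩
      refine ⟨fun u v => ?_⟩
      have huv : u = v := Subsingleton.elim u v
      exact huv ▸ SimpleGraph.Reachable.refl u
    rw [huniv]
    haveI : MeasureTheory.IsProbabilityMeasure (SKG.skg P t) :=
      SKGProof.pm_isProb (fun e => SKGProof.symProb_mem h01 e)
    rw [measure_univ]
    refine ENNReal.ofReal_le_one.mpr ?_
    have := Real.exp_pos (-1 * (2:ℝ) ^ t)
    linarith
  -- main case k ≥ 2
  · obtain ⟨p, hp_pos, hp_le⟩ := SKGProof.exists_pmin (P := P) (hB := hB) hk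
    obtain ⟨qm, hqm_pos, hqm_le⟩ := SKGProof.exists_qmin (P := P) (hB := hB) h01 hsymm hk
    obtain ⟨i₀, hi₀⟩ := SKGProof.exists_good (P := P) (hB := hB) hsymm hconn hnb
      (by omega : 1 < k)
    set R : ℝ := 1 + p ^ 2 with hRdef
    have hR1 : 1 < R := by nlinarith
    have hRle : ∀ i, SKGProof.goodS P i → R ≤ SKGProof.QM P i i := fun i hi => by
      rw [hRdef]
      exact SKGProof.QM_diag_good (hB := hB) h01 hsymm hp_pos.le hp_le hi
    set lam : ℝ := Real.sqrt R with hlamdef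
    have hlam1 : 1 < lam := by
      have := Real.sqrt_lt_sqrt (by norm_num : (0:ℝ) ≤ 1) hR1
      rwa [Real.sqrt_one] at this
    set d : ℝ := Real.sqrt lam with hddef
    have hd1 : 1 < d := by
      have := Real.sqrt_lt_sqrt (by norm_num : (0:ℝ) ≤ 1) hlam1
      rwa [Real.sqrt_one] at this
    have hd2 : d ^ 2 = lam := Real.sq_sqrt (by linarith)
    have hlam2 : lam ^ 2 = R := Real.sq_sqrt (by linarith)
    have hklog : 0 ≤ Real.log k := Real.log_nonneg (by exact_mod_cast Nat.one_le_iff_ne_zero.mpr (by omega))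
    set C : ℝ := 2 * Real.log k / (d - 1) with hCdef
    have hC0 : 0 ≤ C := div_nonneg (by linarith) (by linarith)
    set a : ℝ := qm / lam ^ 4 with hadef
    have ha : 0 < a := div_pos hqm_pos (by positivity)
    obtain ⟨t₁, ht₁⟩ := pow_unbounded_of_one_lt (max 1 ((C + 3) / a)) hd1
    refine ⟨d, hd1, 1, one_pos, max t₁ 4, fun t ht => ?_⟩
    have ht4 : 4 ≤ t := le_trans (le_max_right _ _) ht
    have htt1 : t₁ ≤ t := le_trans (le_max_left _ _) ht
    set mm : ℕ := t - t / 2 with hmmdef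
    set θ : ℝ := qm * R ^ (mm - 2) with hθdef
    -- ===== the analytic inequality =====
    have hX : max 1 ((C + 3) / a) < d ^ t :=
      lt_of_lt_of_le ht₁ (pow_le_pow_right₀ (by linarith) htt1)
    have hX1 : (1:ℝ) ≤ d ^ t := le_of_lt (lt_of_le_of_lt (le_max_left _ _) hX)
    have hXa : C + 3 ≤ a * d ^ t := by
      have h2 : (C + 3) / a < d ^ t := lt_of_le_of_lt (le_max_right _ _) hX
      rw [div_lt_iff₀ ha] at h2
      nlinarith
    have htX : (t : ℝ) * (d - 1) ≤ d ^ t := by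
      have h3 := one_add_mul_le_pow (show (-2:ℝ) ≤ d - 1 by linarith) t
      have h4 : (1 + (d - 1) : ℝ) = d := by ring
      rw [h4] at h3
      linarith
    have hθ_big : d ^ t + 2 * t * Real.log k + 2 ≤ θ := by
      have e1 : lam ^ (2 * (mm - 2)) = R ^ (mm - 2) := by
        rw [pow_mul, hlam2]
      have e2 : lam ^ (t - 4) ≤ lam ^ (2 * (mm - 2)) :=
        pow_le_pow_right₀ (le_of_lt hlam1) (by omega)
      have e3 : lam ^ (t - 4) = lam ^ t / lam ^ 4 := by
        rw [pow_sub₀ lam (by positivity) ht4, div_eq_mul_inv]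
      have e4 : lam ^ t = (d ^ t) ^ 2 := by
        rw [← hd2, ← pow_mul, ← pow_mul, mul_comm]
      have e5 : a * (d ^ t) ^ 2 ≤ θ := by
        rw [hθdef]
        calc a * (d ^ t) ^ 2 = qm * (lam ^ t / lam ^ 4) := by
              rw [hadef, ← e4]; ring
          _ = qm * lam ^ (t - 4) := by rw [e3]
          _ ≤ qm * lam ^ (2 * (mm - 2)) := by nlinarith [e2, hqm_pos]
          _ = qm * R ^ (mm - 2) := by rw [e1]
      have h7 : 2 * (t:ℝ) * Real.log k ≤ C * d ^ t := by
        rw [hCdef, div_mul_eq_mul_div, le_div_iff₀ (by linarith : (0:ℝ) < d - 1)]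
        nlinarith [mul_le_mul_of_nonneg_left htX (by linarith : (0:ℝ) ≤ 2 * Real.log k)]
      have h8 : (C + 3) * d ^ t ≤ a * (d ^ t) ^ 2 := by
        nlinarith [mul_le_mul_of_nonneg_right hXa (by positivity : (0:ℝ) ≤ d ^ t)]
      nlinarith [h7, h8, hX1, e5]
    -- ===== probability set-up =====
    set q : Sym2 (Fin t → Fin k) → ℝ := SKG.symProb P t with hqdef
    have hq : ∀ e, q e ∈ Set.Icc (0:ℝ) 1 := fun e => SKGProof.symProb_mem h01 e
    haveI : MeasureTheory.IsProbabilityMeasure (SKGProof.pm q) := SKGProof.pm_isProb hq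
    set z : Fin t → Fin k := fun _ => i₀ with hzdef
    set bbV : (Fin t → Fin k) → Fin t → Fin k := fun u l => SKGProof.bb P hB (u l) with hbbVdef
    set HP : Finset ((Fin t → Fin k) × (Fin t → Fin k)) :=
      Finset.univ.filter
        (fun pr => pr.1 ≠ pr.2 ∧ θ ≤ ∏ l, SKGProof.QM P (pr.1 l) (pr.2 l)) with hHPdef
    set B0 : Set (Sym2 (Fin t → Fin k) → Bool) := {ω | ∀ u, ω s(u, bbV u) = true} with hB0def
    set Bad : (Fin t → Fin k) → (Fin t → Fin k) → Set (Sym2 (Fin t → Fin k) → Bool) :=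
      fun x y => {ω | ∀ w ∈ Finset.univ \ ({x, y} : Finset (Fin t → Fin k)),
        ¬(ω s(x, w) = true ∧ ω s(w, y) = true)} with hBaddef
    have hreach2 : ∀ s0 : Fin k,
        Relation.ReflTransGen (fun a b => a ≠ b ∧ 0 < SKGProof.QM P a b) s0 i₀ :=
      fun s0 => SKGProof.rtg_ne (SKGProof.qReach h01 hsymm hconn hnb hk s0 i₀)
    -- ===== deterministic part =====
    have hdet : ∀ ω : Sym2 (Fin t → Fin k) → Bool, ω ∈ B0 →
        (∀ pr ∈ HP, ω ∉ Bad pr.1 pr.2) → (SKG.graphOf ω).Connected := by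
      intro ω hB0mem hHPmem
      have hB0' : ∀ u : Fin t → Fin k, ω s(u, bbV u) = true := hB0mem
      have hedge : ∀ x y : Fin t → Fin k, x ≠ y → θ ≤ ∏ l, SKGProof.QM P (x l) (y l) →
          (SKG.graphOf ω).Reachable x y := by
        intro x y hxy hθxy
        have hmem : (x, y) ∈ HP := by
          rw [hHPdef]
          exact Finset.mem_filter.mpr ⟨Finset.mem_univ _, hxy, hθxy⟩
        have hnb2 := hHPmem (x, y) hmem
        simp only [hBaddef] at hnb2
        simp only [Set.mem_setOf_eq] at hnb2
        push_neg at hnb2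
        obtain ⟨w, hw, hcon1, hcon2⟩ := hnb2
        have hw2 := (Finset.mem_sdiff.mp hw).2
        have hwx : w ≠ x := fun h => hw2 (by simp [h])
        have hwy : w ≠ y := fun h => hw2 (by simp [h])
        have ha1 : (SKG.graphOf ω).Adj x w := ⟨Ne.symm hwx, hcon1⟩
        have ha2 : (SKG.graphOf ω).Adj w y := ⟨hwy, hcon2⟩
        exact ha1.reachable.trans ha2.reachable
      have hstep : ∀ x y : Fin t → Fin k, SKGProof.StepR (P := P) mm x y →
          (SKG.graphOf ω).Reachable x y := by
        intro x y hs
        obtain ⟨⟨c, j', hy, hnej, hQ⟩, hgx, hgy⟩ := hs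
        subst hy
        have hxy : x ≠ Function.update x c j' := by
          intro h
          apply hnej
          have := congrFun h c
          rwa [Function.update_self] at this
        refine hedge _ _ hxy ?_
        have hbd := SKGProof.prodQ_step (hB := hB) h01 hsymm hqm_pos.le hR1.le hqm_le
          hRle x c hQ
        refine le_trans ?_ hbd
        rw [hθdef]
        have hexp : mm - 2 ≤ (SKGProof.Gcnt P x).card - 1 := by omega
        exact mul_le_mul_of_nonneg_left (pow_le_pow_right₀ hR1.le hexp) hqm_pos.le
      have hRTG : ∀ x y : Fin t → Fin k,
          Relation.ReflTransGen (SKGProof.StepR (P := P) mm) x y →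
          (SKG.graphOf ω).Reachable x y := by
        intro x y h
        induction h with
        | refl => exact SimpleGraph.Reachable.refl _
        | tail h1 h2 ih => exact ih.trans (hstep _ _ h2)
      have hreachz : ∀ u : Fin t → Fin k, (SKG.graphOf ω).Reachable u z := by
        intro u
        by_cases hu : mm ≤ (SKGProof.Gcnt P u).card
        · exact hRTG u _ (SKGProof.path_to_z (hB := hB) mm hi₀ hreach2 _ u rfl hu)
        · push_neg at hu
          have hbadcoord : ∃ l, ¬ SKGProof.goodS P (u l) := by
            by_contra hall
            push_neg at hall
            have hGu : SKGProof.Gcnt P u = Finset.univ := by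
              rw [SKGProof.Gcnt]
              exact Finset.filter_true_of_mem (fun l _ => hall l)
            rw [hGu, Finset.card_univ, Fintype.card_fin] at hu
            omega
          obtain ⟨l0, hl0⟩ := hbadcoord
          have hnequ : u ≠ bbV u := by
            intro h
            have h2 := congrFun h l0
            simp only [hbbVdef] at h2
            exact SKGProof.bb_ne_of_bad (hB := hB) hsymm hconn hnb (by omega) hl0 h2.symm
          have hadj : (SKG.graphOf ω).Adj u (bbV u) := ⟨hnequ, hB0' u⟩
          have hGb : mm ≤ (SKGProof.Gcnt P (bbV u)).card := by
            have hsub2 : Finset.univ.filter (fun l => ¬ SKGProof.goodS P (u l))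
                ⊆ SKGProof.Gcnt P (bbV u) := by
              intro l hl
              have hlf := (Finset.mem_filter.mp hl).2
              simp only [SKGProof.Gcnt, Finset.mem_filter, Finset.mem_univ, true_and]
              simp only [hbbVdef]
              exact SKGProof.good_bb_of_bad (hB := hB) hsymm hconn hnb (by omega) hlf
            have hcount := Finset.card_le_card hsub2
            have hfn := Finset.card_filter_add_card_filter_not
              (s := (Finset.univ : Finset (Fin t))) (p := fun l => SKGProof.goodS P (u l))
            rw [Finset.card_univ, Fintype.card_fin] at hfn
            have hG : (SKGProof.Gcnt P u).card
                = (Finset.univ.filter (fun l => SKGProof.goodS P (u l))).card := rfl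
            omega
          exact hadj.reachable.trans
            (hRTG _ _ (SKGProof.path_to_z (hB := hB) mm hi₀ hreach2 _ (bbV u) rfl hGb))
      haveI : Nonempty (Fin t → Fin k) := ⟨z⟩
      exact ⟨fun u v => (hreachz u).trans (hreachz v).symm⟩
    -- ===== measure of B0ᶜ is zero =====
    have hq1 : ∀ u : Fin t → Fin k, q s(u, bbV u) = 1 := by
      intro u
      rw [hqdef, SKGProof.symProb_eq_pk hsymm, SKG.pk]
      refine Finset.prod_eq_one fun l _ => ?_
      simp only [hbbVdef]
      exact SKGProof.bb_spec (hB := hB) (u l)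
    have hB0c : SKGProof.pm q B0ᶜ = 0 := by
      have hsub : B0ᶜ ⊆ ⋃ u ∈ (Finset.univ : Finset (Fin t → Fin k)),
          ({ω : Sym2 (Fin t → Fin k) → Bool | ω s(u, bbV u) = true})ᶜ := by
        intro ω hω
        rw [hB0def] at hω
        simp only [Set.mem_compl_iff, Set.mem_setOf_eq, not_forall] at hω
        obtain ⟨u, hu⟩ := hω
        simp only [Set.mem_iUnion]
        exact ⟨u, Finset.mem_univ u, by simpa using hu⟩
      have hzero : ∀ u : Fin t → Fin k,
          SKGProof.pm q (({ω : Sym2 (Fin t → Fin k) → Bool | ω s(u, bbV u) = true})ᶜ) = 0 := by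
        intro u
        rw [MeasureTheory.measure_compl (SKGProof.measurableSet_all _)
          (MeasureTheory.measure_ne_top _ _), SKGProof.pm_coord hq]
        simp [SKGProof.wgt, hq1 u]
      refine le_antisymm ?_ zero_le
      calc SKGProof.pm q B0ᶜ
          ≤ ∑ u : Fin t → Fin k,
            SKGProof.pm q (({ω : Sym2 (Fin t → Fin k) → Bool | ω s(u, bbV u) = true})ᶜ) :=
            (measure_mono hsub).trans (MeasureTheory.measure_biUnion_finset_le _ _)
        _ = 0 := by simp [hzero]
    -- ===== bound for each Bad event =====
    have hbad_le : ∀ x y : Fin t → Fin k, x ≠ y → θ ≤ ∏ l, SKGProof.QM P (x l) (y l) →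
        SKGProof.pm q (Bad x y) ≤ ENNReal.ofReal (Real.exp (2 - θ)) := by
      intro x y hxy hθxy
      have hne : ∀ w ∈ Finset.univ \ ({x, y} : Finset (Fin t → Fin k)),
          s(x, w) ≠ s(w, y) := by
        intro w hw
        have hw2 := (Finset.mem_sdiff.mp hw).2
        have hwx : w ≠ x := fun h => hw2 (by simp [h])
        intro hcontra
        rcases Sym2.eq_iff.mp hcontra with ⟨h1, h2⟩ | ⟨h1, h2⟩
        · exact hwx h1.symm
        · exact hxy h1
      have hcross : ∀ a ∈ Finset.univ \ ({x, y} : Finset (Fin t → Fin k)),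
          ∀ b ∈ Finset.univ \ ({x, y} : Finset (Fin t → Fin k)), a ≠ b →
          s(x, a) ≠ s(x, b) ∧ s(x, a) ≠ s(b, y) ∧ s(a, y) ≠ s(x, b) ∧ s(a, y) ≠ s(b, y) := by
        intro aa ha bb hb hab
        have ha2 := (Finset.mem_sdiff.mp ha).2
        have hb2 := (Finset.mem_sdiff.mp hb).2
        have hax : aa ≠ x := fun h => ha2 (by simp [h])
        have hay : aa ≠ y := fun h => ha2 (by simp [h])
        have hbx : bb ≠ x := fun h => hb2 (by simp [h])
        have hby : bb ≠ y := fun h => hb2 (by simp [h])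
        refine ⟨?_, ?_, ?_, ?_⟩ <;> intro hcontra
        · rcases Sym2.eq_iff.mp hcontra with ⟨h1, h2⟩ | ⟨h1, h2⟩
          · exact hab h2
          · exact hbx h1.symm
        · rcases Sym2.eq_iff.mp hcontra with ⟨h1, h2⟩ | ⟨h1, h2⟩
          · exact hbx h1.symm
          · exact hxy h1
        · rcases Sym2.eq_iff.mp hcontra with ⟨h1, h2⟩ | ⟨h1, h2⟩
          · exact hax h1
          · exact hab h1
        · rcases Sym2.eq_iff.mp hcontra with ⟨h1, h2⟩ | ⟨h1, h2⟩
          · exact hab h1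
          · exact hay h1
      have hprod : SKGProof.pm q (Bad x y)
          = ∏ w ∈ Finset.univ \ ({x, y} : Finset (Fin t → Fin k)),
            (1 - ENNReal.ofReal (q s(x, w)) * ENNReal.ofReal (q s(w, y))) := by
        simp only [hBaddef]
        exact SKGProof.pm_pairs_prod hq (fun w => s(x, w)) (fun w => s(w, y)) _ hne hcross
      rw [hprod]
      have hfac : ∀ w ∈ Finset.univ \ ({x, y} : Finset (Fin t → Fin k)),
          (1 - ENNReal.ofReal (q s(x, w)) * ENNReal.ofReal (q s(w, y)))
          ≤ ENNReal.ofReal (Real.exp (-(SKG.pk P t x w * SKG.pk P t w y))) := by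
        intro w _
        have e1 : q s(x, w) = SKG.pk P t x w := by
          rw [hqdef]; exact SKGProof.symProb_eq_pk hsymm x w
        have e2 : q s(w, y) = SKG.pk P t w y := by
          rw [hqdef]; exact SKGProof.symProb_eq_pk hsymm w y
        have hnn1 := SKGProof.pk_nonneg h01 x w
        have hnn2 := SKGProof.pk_nonneg h01 w y
        have hle1 := SKGProof.pk_le_one h01 x w
        have hle2 := SKGProof.pk_le_one h01 w y
        rw [e1, e2, ← ENNReal.ofReal_mul hnn1]
        rw [show (1 : ℝ≥0∞) = ENNReal.ofReal 1 from ENNReal.ofReal_one.symm,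
          ← ENNReal.ofReal_sub 1 (mul_nonneg hnn1 hnn2)]
        refine ENNReal.ofReal_le_ofReal ?_
        have := Real.add_one_le_exp (-(SKG.pk P t x w * SKG.pk P t w y))
        linarith
      calc ∏ w ∈ Finset.univ \ ({x, y} : Finset (Fin t → Fin k)),
            (1 - ENNReal.ofReal (q s(x, w)) * ENNReal.ofReal (q s(w, y)))
          ≤ ∏ w ∈ Finset.univ \ ({x, y} : Finset (Fin t → Fin k)),
            ENNReal.ofReal (Real.exp (-(SKG.pk P t x w * SKG.pk P t w y))) :=
            Finset.prod_le_prod' hfac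
        _ = ENNReal.ofReal (∏ w ∈ Finset.univ \ ({x, y} : Finset (Fin t → Fin k)),
            Real.exp (-(SKG.pk P t x w * SKG.pk P t w y))) :=
            (ENNReal.ofReal_prod_of_nonneg (fun _ _ => (Real.exp_pos _).le)).symm
        _ = ENNReal.ofReal (Real.exp (∑ w ∈ Finset.univ \ ({x, y} : Finset (Fin t → Fin k)),
            -(SKG.pk P t x w * SKG.pk P t w y))) := by rw [Real.exp_sum]
        _ ≤ ENNReal.ofReal (Real.exp (2 - θ)) := by
            refine ENNReal.ofReal_le_ofReal (Real.exp_le_exp.mpr ?_)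
            rw [Finset.sum_neg_distrib]
            have hid : ∑ w : Fin t → Fin k, SKG.pk P t x w * SKG.pk P t w y
                = ∏ l, SKGProof.QM P (x l) (y l) := SKGProof.sum_pk_mul x y
            have hsd := Finset.sum_sdiff_eq_sub
              (Finset.subset_univ ({x, y} : Finset (Fin t → Fin k)))
              (f := fun w => SKG.pk P t x w * SKG.pk P t w y)
            have hpairsum : ∑ w ∈ ({x, y} : Finset (Fin t → Fin k)),
                SKG.pk P t x w * SKG.pk P t w y ≤ 2 := by
              rw [Finset.sum_pair hxy]
              have h1 := SKGProof.pk_nonneg h01 x x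
              have h2 := SKGProof.pk_le_one h01 x x
              have h3 := SKGProof.pk_nonneg h01 x y
              have h4 := SKGProof.pk_le_one h01 x y
              have h5 := SKGProof.pk_nonneg h01 y y
              have h6 := SKGProof.pk_le_one h01 y y
              have h7 := SKGProof.pk_nonneg h01 x x
              nlinarith
            rw [hsd, hid]
            linarith
    -- ===== assembling =====
    have hsubset : ({ω : Sym2 (Fin t → Fin k) → Bool | (SKG.graphOf ω).Connected})ᶜ
        ⊆ B0ᶜ ∪ ⋃ pr ∈ HP, Bad pr.1 pr.2 := by
      intro ω hω
      rw [Set.mem_compl_iff, Set.mem_setOf_eq] at hω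
      by_contra hcon
      simp only [Set.mem_union, Set.mem_iUnion, not_or, not_exists] at hcon
      obtain ⟨h1, h2⟩ := hcon
      rw [Set.notMem_compl_iff] at h1
      exact hω (hdet ω h1 (fun pr hpr => h2 pr hpr))
    have hμc : SKGProof.pm q (({ω : Sym2 (Fin t → Fin k) → Bool | (SKG.graphOf ω).Connected})ᶜ)
        ≤ ENNReal.ofReal (Real.exp (-(d ^ t))) := by
      calc SKGProof.pm q (({ω : Sym2 (Fin t → Fin k) → Bool | (SKG.graphOf ω).Connected})ᶜ)
          ≤ SKGProof.pm q (B0ᶜ ∪ ⋃ pr ∈ HP, Bad pr.1 pr.2) := measure_mono hsubset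
        _ ≤ SKGProof.pm q B0ᶜ + SKGProof.pm q (⋃ pr ∈ HP, Bad pr.1 pr.2) :=
            MeasureTheory.measure_union_le _ _
        _ ≤ 0 + ∑ pr ∈ HP, SKGProof.pm q (Bad pr.1 pr.2) :=
            add_le_add hB0c.le (MeasureTheory.measure_biUnion_finset_le _ _)
        _ ≤ ∑ _pr ∈ HP, ENNReal.ofReal (Real.exp (2 - θ)) := by
            rw [zero_add]
            refine Finset.sum_le_sum fun pr hpr => ?_
            rw [hHPdef] at hpr
            have hm := Finset.mem_filter.mp hpr
            exact hbad_le pr.1 pr.2 hm.2.1 hm.2.2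
        _ = (HP.card : ℝ≥0∞) * ENNReal.ofReal (Real.exp (2 - θ)) := by
            rw [Finset.sum_const, nsmul_eq_mul]
        _ ≤ (((k ^ t) ^ 2 : ℕ) : ℝ≥0∞) * ENNReal.ofReal (Real.exp (2 - θ)) := by
            refine mul_le_mul_left ?_ _
            have hc1 : HP.card ≤ Fintype.card ((Fin t → Fin k) × (Fin t → Fin k)) :=
              Finset.card_le_univ HP
            rw [Fintype.card_prod, Fintype.card_fun, Fintype.card_fin, Fintype.card_fin] at hc1
            exact_mod_cast hc1.trans_eq (sq (k ^ t)).symm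
        _ = ENNReal.ofReal (((k : ℝ) ^ t) ^ 2 * Real.exp (2 - θ)) := by
            rw [ENNReal.ofReal_mul (by positivity)]
            congr 1
            rw [← ENNReal.ofReal_natCast ((k ^ t) ^ 2)]
            congr 1
            push_cast
            ring
        _ ≤ ENNReal.ofReal (Real.exp (-(d ^ t))) := by
            refine ENNReal.ofReal_le_ofReal ?_
            have hkexp : ((k : ℝ) ^ t) ^ 2 = Real.exp (2 * t * Real.log k) := by
              have h1 : Real.exp (Real.log k) = (k : ℝ) :=
                Real.exp_log (by exact_mod_cast hk)
              rw [show (2 : ℝ) * t * Real.log k = ((2 * t : ℕ) : ℝ) * Real.log k by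
                push_cast; ring]
              rw [Real.exp_nat_mul, h1, ← pow_mul, Nat.mul_comm t 2]
            rw [hkexp, ← Real.exp_add]
            refine Real.exp_le_exp.mpr ?_
            linarith [hθ_big]
    -- ===== final inequality =====
    have hfin : ENNReal.ofReal (1 - Real.exp (-(d ^ t)))
        ≤ SKGProof.pm q {ω : Sym2 (Fin t → Fin k) → Bool | (SKG.graphOf ω).Connected} := by
      have hcompl : SKGProof.pm q {ω : Sym2 (Fin t → Fin k) → Bool | (SKG.graphOf ω).Connected}
          = 1 - SKGProof.pm q
            (({ω : Sym2 (Fin t → Fin k) → Bool | (SKG.graphOf ω).Connected})ᶜ) := by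
        have h1 := MeasureTheory.prob_compl_eq_one_sub (μ := SKGProof.pm q)
          (SKGProof.measurableSet_all
            (({ω : Sym2 (Fin t → Fin k) → Bool | (SKG.graphOf ω).Connected})ᶜ))
        rwa [compl_compl] at h1
      rw [hcompl]
      have hexp1 : Real.exp (-(d ^ t)) ≤ 1 := by
        rw [show (1:ℝ) = Real.exp 0 from Real.exp_zero.symm]
        refine Real.exp_le_exp.mpr ?_
        have : (0:ℝ) < d ^ t := by positivity
        linarith
      calc ENNReal.ofReal (1 - Real.exp (-(d ^ t)))
          ≤ 1 - ENNReal.ofReal (Real.exp (-(d ^ t))) := by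
            rw [ENNReal.ofReal_sub 1 (Real.exp_pos (-(d ^ t))).le, ENNReal.ofReal_one]
        _ ≤ 1 - SKGProof.pm q
            (({ω : Sym2 (Fin t → Fin k) → Bool | (SKG.graphOf ω).Connected})ᶜ) :=
            tsub_le_tsub_left hμc 1
    rw [show (-1 : ℝ) * d ^ t = -(d ^ t) by ring]
    exact hfin
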